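/- Let $X$ and $Y$ be nonempty compact Hausdorff topological spaces. If there exists a star-algebra isomorphism between $C(X,\mathbb{C})$ and $C(Y,\mathbb{C})$, then $X$ and $Y$ are homeomorphic. -/
import Mathlib

open WeakDual WeakDual.CharacterSpace

/-- If `X` and `Y` are nonempty compact Hausdorff spaces and there is a star-algebra
isomorphism between `C(X, ℂ)` and `C(Y, ℂ)`, then `X` and `Y` are homeomorphic. -/
theorem homeomorphic_of_starAlgEquiv
    {X Y : Type*} [TopologicalSpace X] [CompactSpace X] [T2Space X] [Nonempty X]
    [TopologicalSpace Y] [CompactSpace Y] [T2Space Y] [Nonempty Y]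
    (h : Nonempty (C(X, ℂ) ≃⋆ₐ[ℂ] C(Y, ℂ))) :
    Nonempty (X ≃ₜ Y) := by
  obtain ⟨φ⟩ := h
  let e : characterSpace ℂ C(X, ℂ) ≃ₜ characterSpace ℂ C(Y, ℂ) :=
    { toFun := compContinuousMap (φ.symm : C(Y, ℂ) →⋆ₐ[ℂ] C(X, ℂ))
      invFun := compContinuousMap (φ : C(X, ℂ) →⋆ₐ[ℂ] C(Y, ℂ))
      left_inv := fun x => by
        have := congrFun (congrArg DFunLike.coe
          (compContinuousMap_comp (φ.symm : C(Y, ℂ) →⋆ₐ[ℂ] C(X, ℂ))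
            (φ : C(X, ℂ) →⋆ₐ[ℂ] C(Y, ℂ)))) x
        simp only [ContinuousMap.comp_apply] at this
        rw [← this]
        have h2 : ((φ.symm : C(Y, ℂ) →⋆ₐ[ℂ] C(X, ℂ)).comp
            (φ : C(X, ℂ) →⋆ₐ[ℂ] C(Y, ℂ))) = StarAlgHom.id ℂ C(X, ℂ) := by
          ext f; simp
        rw [h2, compContinuousMap_id]; rfl
      right_inv := fun y => by
        have := congrFun (congrArg DFunLike.coe
          (compContinuousMap_comp (φ : C(X, ℂ) →⋆ₐ[ℂ] C(Y, ℂ))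
            (φ.symm : C(Y, ℂ) →⋆ₐ[ℂ] C(X, ℂ)))) y
        simp only [ContinuousMap.comp_apply] at this
        rw [← this]
        have h2 : ((φ : C(X, ℂ) →⋆ₐ[ℂ] C(Y, ℂ)).comp
            (φ.symm : C(Y, ℂ) →⋆ₐ[ℂ] C(X, ℂ))) = StarAlgHom.id ℂ C(Y, ℂ) := by
          ext f; simp
        rw [h2, compContinuousMap_id]; rfl
      continuous_toFun := (compContinuousMap _).continuous
      continuous_invFun := (compContinuousMap _).continuous }
  exact ⟨(homeoEval X ℂ).trans (e.trans (homeoEval Y ℂ).symm)⟩
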